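/- A pointwise limit of continuous functions from a Baire space into a metrizable space has a point of continuity; consequently, if 𝔤 is a Fréchet space, V metrizable locally convex, and ω : 𝔤ⁿ → V is an n-linear map that is the pointwise limit of a sequence of continuous maps Fₖ : 𝔤ⁿ → V, then ω is continuous. -/

import Mathlib

/-!
Osgood's theorem: for each `ε > 0`, Baire's theorem applied to the closed sets
`{x | ∀ k ≥ N, edist (F N x) (F k x) ≤ δ}`, which cover the space, shows that the points where
`f` oscillates by less than `ε` form a dense open set; intersecting over `ε = 1/n` gives a dense
set of continuity points.

A multilinear map continuous at one point `a` is continuous at `0`, since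
`ω x = ω (x with x j + a j at j) - ω (x with a j at j)` moves the continuity point one coordinate
at a time to `0`. Continuity at `0` then propagates to every `b` by expanding `ω (b + h)` as a
sum over subsets of coordinates: every term other than `ω b` involves some `h j` and tends to
`0`, after rescaling the fixed coordinates towards `0` and compensating in the `j`-th one.
-/

open Set Filter Topology Function Metric
open scoped ENNReal

section Osgood

variable {X Y : Type*} [TopologicalSpace X] [PseudoEMetricSpace Y]

theorem oscillation_lt_iff {f : X → Y} {x : X} {ε : ℝ≥0∞} :
    oscillation f x < ε ↔ ∃ U ∈ 𝓝 x, ediam (f '' U) < ε := by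
  simp only [oscillation, iInf_lt_iff, exists_prop]
  constructor
  · rintro ⟨S, hS, hSε⟩
    exact ⟨f ⁻¹' S, hS, (ediam_mono (image_preimage_subset f S)).trans_lt hSε⟩
  · rintro ⟨U, hU, hUε⟩
    exact ⟨f '' U, image_mem_map hU, hUε⟩

theorem isOpen_setOf_oscillation_lt (f : X → Y) (ε : ℝ≥0∞) :
    IsOpen {x | oscillation f x < ε} := by
  refine isOpen_iff_mem_nhds.2 fun x hx => ?_
  obtain ⟨U, hU, hUε⟩ := oscillation_lt_iff.1 hx
  filter_upwards [interior_mem_nhds.2 hU] with y hy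
  exact oscillation_lt_iff.2 ⟨U, mem_interior_iff_mem_nhds.1 hy, hUε⟩

variable {f : X → Y} {F : ℕ → X → Y}

theorem dense_setOf_oscillation_lt_of_tendsto [BaireSpace X] (hF : ∀ k, Continuous (F k))
    (hlim : ∀ x, Tendsto (fun k => F k x) atTop (𝓝 (f x))) {ε : ℝ≥0∞} (hε : 0 < ε) :
    Dense {x | oscillation f x < ε} := by
  obtain ⟨δ, hδ, hδε⟩ := ENNReal.exists_nnreal_pos_mul_lt (a := 4) (by simp) hε.ne'
  set C : ℕ → Set X := fun N => {x | ∀ k ≥ N, edist (F N x) (F k x) ≤ δ}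
  have hC_closed (N : ℕ) : IsClosed (C N) := by
    simp only [C, ofPred_forall]
    exact isClosed_iInter fun k => isClosed_iInter fun _ =>
      isClosed_le ((hF N).edist (hF k)) continuous_const
  have hC_cover : ⋃ N, C N = univ := by
    refine eq_univ_of_forall fun x => mem_iUnion.2 ?_
    obtain ⟨N, hN⟩ := EMetric.cauchySeq_iff'.1 (hlim x).cauchySeq δ (by simpa using hδ)
    exact ⟨N, fun k hk => by rw [edist_comm]; exact (hN k hk).le⟩
  have hC_limit {N : ℕ} {y : X} (hy : y ∈ C N) : edist (F N y) (f y) ≤ δ :=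
    le_of_tendsto (tendsto_const_nhds.edist (hlim y)) (eventually_atTop.2 ⟨N, hy⟩)
  refine (dense_iUnion_interior_of_closed hC_closed hC_cover).mono ?_
  simp only [iUnion_subset_iff]
  intro N x hx
  refine oscillation_lt_iff.2 ⟨interior (C N) ∩ {y | edist (F N y) (F N x) < δ},
    inter_mem (isOpen_interior.mem_nhds hx) ((hF N).continuousAt.eventually
      (eball_mem_nhds _ (by simpa using hδ))), ?_⟩
  refine lt_of_le_of_lt (ediam_image_le_iff.2 fun y hy z hz => ?_) hδε
  have hyz : edist (F N y) (F N z) ≤ δ + δ :=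
    (edist_triangle _ (F N x) _).trans (add_le_add hy.2.le (by rw [edist_comm]; exact hz.2.le))
  calc edist (f y) (f z)
      ≤ edist (f y) (F N y) + edist (F N y) (F N z) + edist (F N z) (f z) :=
        edist_triangle4 _ _ _ _
    _ ≤ δ + (δ + δ) + δ := by
        gcongr
        · rw [edist_comm]; exact hC_limit (interior_subset hy.1)
        · exact hC_limit (interior_subset hz.1)
    _ = δ * 4 := by ring

end Osgood

theorem dense_setOf_continuousAt_of_tendsto {X Y : Type*} [TopologicalSpace X] [BaireSpace X]
    [TopologicalSpace Y] [TopologicalSpace.PseudoMetrizableSpace Y] {f : X → Y} {F : ℕ → X → Y}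
    (hF : ∀ k, Continuous (F k)) (hlim : ∀ x, Tendsto (fun k => F k x) atTop (𝓝 (f x))) :
    Dense {x | ContinuousAt f x} := by
  let := TopologicalSpace.pseudoMetrizableSpacePseudoMetric Y
  have hosc : {x | ContinuousAt f x} = ⋂ n : ℕ, {x | oscillation f x < (n : ℝ≥0∞)⁻¹} := by
    ext x
    simp only [mem_ofPred_eq, mem_iInter, ← Oscillation.eq_zero_iff_continuousAt]
    refine ⟨fun h n => by simp [h], fun h => by_contra fun hne => ?_⟩
    obtain ⟨n, hn⟩ := ENNReal.exists_inv_nat_lt hne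
    exact (h n).not_gt hn
  rw [hosc]
  exact dense_iInter_of_isOpen_nat (fun n => isOpen_setOf_oscillation_lt f _)
    fun n => dense_setOf_oscillation_lt_of_tendsto hF hlim (by simp)

namespace MultilinearMap

variable {R 𝕜 ι V : Type*} {E : ι → Type*} [DecidableEq ι]
  [∀ i, AddCommGroup (E i)] [∀ i, TopologicalSpace (E i)] [AddCommGroup V] [TopologicalSpace V]

theorem continuousAt_update_zero [Semiring R] [∀ i, Module R (E i)] [Module R V]
    [∀ i, ContinuousAdd (E i)] [ContinuousSub V] (ω : MultilinearMap R E V) {a : ∀ i, E i}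
    (hω : ContinuousAt ω a) (j : ι) : ContinuousAt ω (update a j 0) := by
  have hsplit : (fun x => ω (update x j (x j + a j)) - ω (update x j (a j))) = ω := by
    ext x
    rw [ω.map_update_add, update_eq_self, add_sub_cancel_right]
  rw [← hsplit]
  refine ContinuousAt.sub (hω.comp_of_eq ?_ (by simp)) (hω.comp_of_eq ?_ (by simp))
  · exact (continuous_id.update j ((continuous_apply j).add continuous_const)).continuousAt
  · exact (continuous_id.update j continuous_const).continuousAt

theorem continuousAt_zero_of_continuousAt [Semiring R] [∀ i, Module R (E i)] [Module R V]
    [Fintype ι] [∀ i, ContinuousAdd (E i)] [ContinuousSub V] (ω : MultilinearMap R E V)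
    {a : ∀ i, E i} (hω : ContinuousAt ω a) : ContinuousAt ω 0 := by
  suffices ∀ s : Finset ι, ContinuousAt ω (s.piecewise 0 a) by
    simpa using this Finset.univ
  intro s
  induction s using Finset.induction_on with
  | empty => simpa using hω
  | insert j s _ ih =>
    rw [Finset.piecewise_insert]
    exact ω.continuousAt_update_zero ih j

theorem tendsto_piecewise_nhds_zero [NontriviallyNormedField 𝕜] [∀ i, Module 𝕜 (E i)]
    [Module 𝕜 V] [∀ i, ContinuousSMul 𝕜 (E i)] (ω : MultilinearMap 𝕜 E V) [Fintype ι]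
    (hω : ContinuousAt ω 0) {s : Finset ι} {j : ι} (hj : j ∉ s) (c : ∀ i, E i) :
    Tendsto (fun h => ω (s.piecewise c h)) (𝓝 0) (𝓝 0) := by
  -- Rescaling `c` by `τ` and the `j`-th coordinate by `τ ^ (-#s)` leaves `ω` unchanged.
  set r : 𝕜 → ι → 𝕜 := fun τ => update (s.piecewise (fun _ => τ) 1) j (τ ^ s.card)⁻¹
  have hrescale {τ : 𝕜} (hτ : τ ≠ 0) (x : ∀ i, E i) : ω (fun i => r τ i • x i) = ω x := by
    rw [map_smul_univ, Finset.prod_update_of_mem (Finset.mem_univ j), Finset.prod_piecewise]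
    simp [Finset.sdiff_singleton_eq_erase, hj, hτ]
  have hsmall : Tendsto (fun τ => fun i => r τ i • s.piecewise c 0 i) (𝓝[≠] 0) (𝓝 0) := by
    refine tendsto_pi_nhds.2 fun i => ?_
    by_cases hi : i ∈ s
    · have hij : i ≠ j := ne_of_mem_of_not_mem hi hj
      simp only [r, update_of_ne hij, Finset.piecewise_eq_of_mem _ _ _ hi]
      refine tendsto_nhdsWithin_of_tendsto_nhds ?_
      simpa using (tendsto_id (x := 𝓝 (0 : 𝕜))).smul_const (c i)
    · simpa [Finset.piecewise_eq_of_notMem _ _ _ hi] using tendsto_const_nhds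
  have : Nonempty ι := ⟨j⟩
  rw [← ω.map_zero]
  intro W hW
  obtain ⟨O, hOW, hO, h0O⟩ := mem_nhds_iff.1 (hω hW)
  obtain ⟨τ, hτO, hτ⟩ := ((hsmall.eventually (hO.mem_nhds h0O)).and self_mem_nhdsWithin).exists
  have hcont : Continuous fun h => fun i => r τ i • s.piecewise c h i := by
    refine continuous_pi fun i => continuous_const.smul ?_
    by_cases hi : i ∈ s <;> simp [Finset.piecewise, hi, continuous_apply, continuous_const]
  refine mem_map.2 ?_
  filter_upwards [hcont.continuousAt.preimage_mem_nhds (hO.mem_nhds hτO)] with h hh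
  rw [mem_preimage, ← hrescale hτ]
  exact hOW hh

theorem continuous_of_continuousAt_zero [NontriviallyNormedField 𝕜] [∀ i, Module 𝕜 (E i)]
    [Module 𝕜 V] [∀ i, IsTopologicalAddGroup (E i)] [∀ i, ContinuousSMul 𝕜 (E i)]
    [ContinuousAdd V] [Fintype ι] (ω : MultilinearMap 𝕜 E V) (hω : ContinuousAt ω 0) :
    Continuous ω := by
  refine continuous_iff_continuousAt.2 fun b => ?_
  have hexpand (h : ∀ i, E i) :
      ω (b + h) = ω b + ∑ s ∈ Finset.univ.erase Finset.univ, ω (s.piecewise b h) := by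
    rw [ω.map_add_univ, ← Finset.add_sum_erase _ _ (Finset.mem_univ _), Finset.piecewise_univ]
  have hrest : Tendsto (fun h => ∑ s ∈ Finset.univ.erase Finset.univ, ω (s.piecewise b h))
      (𝓝 0) (𝓝 0) := by
    simpa using tendsto_finsetSum (Finset.univ.erase Finset.univ) fun s hs =>
      have ⟨j, hj⟩ : ∃ j, j ∉ s := by simpa [Finset.eq_univ_iff_forall] using hs
      ω.tendsto_piecewise_nhds_zero hω hj b
  rw [ContinuousAt, ← map_add_left_nhds_zero b, tendsto_map'_iff]
  simpa only [add_zero, comp_def] using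
    (tendsto_const_nhds.add hrest).congr fun h => (hexpand h).symm

end MultilinearMap

theorem multilinear_pointwise_limit_continuous_general
    {E V : Type*}
    [AddCommGroup E] [Module ℝ E] [UniformSpace E] [IsUniformAddGroup E]
    [ContinuousSMul ℝ E] [CompleteSpace E]
    [TopologicalSpace.MetrizableSpace E]
    [AddCommGroup V] [Module ℝ V] [TopologicalSpace V] [IsTopologicalAddGroup V]
    [TopologicalSpace.MetrizableSpace V]
    {n : ℕ} (ω : MultilinearMap ℝ (fun _ : Fin n => E) V)
    (F : ℕ → (Fin n → E) → V) (hF : ∀ k, Continuous (F k))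
    (hlim : ∀ x : Fin n → E, Tendsto (fun k => F k x) atTop (𝓝 (ω x))) :
    Continuous ω := by
  have : (uniformity E).IsCountablyGenerated := IsUniformAddGroup.uniformity_countably_generated
  have : BaireSpace (Fin n → E) := BaireSpace.of_completelyPseudoMetrizable
  obtain ⟨a, ha⟩ := (dense_setOf_continuousAt_of_tendsto hF hlim).nonempty
  exact ω.continuous_of_continuousAt_zero (ω.continuousAt_zero_of_continuousAt ha)

/-- **Baire category argument for multilinear maps.**  A pointwise limit of continuous
functions from a Baire space into a metrizable space has a point of continuity.
Consequently, if `𝔤` is a Fréchet space (so `𝔤ⁿ` is a Baire space), `V` a metrizable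
locally convex space, and `ω : 𝔤ⁿ → V` an `n`-linear map which is the pointwise limit of
a sequence of continuous maps `Fₖ : 𝔤ⁿ → V`, then `ω` is continuous. -/
theorem multilinear_pointwise_limit_continuous
    {E V : Type*}
    [AddCommGroup E] [Module ℝ E] [UniformSpace E] [IsUniformAddGroup E]
    [ContinuousSMul ℝ E] [CompleteSpace E] [LocallyConvexSpace ℝ E]
    [TopologicalSpace.MetrizableSpace E]
    [AddCommGroup V] [Module ℝ V] [TopologicalSpace V] [IsTopologicalAddGroup V]
    [ContinuousSMul ℝ V] [LocallyConvexSpace ℝ V] [TopologicalSpace.MetrizableSpace V]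
    [T2Space V]
    {n : ℕ} (ω : MultilinearMap ℝ (fun _ : Fin n => E) V)
    (F : ℕ → (Fin n → E) → V) (hF : ∀ k, Continuous (F k))
    (hlim : ∀ x : Fin n → E, Tendsto (fun k => F k x) atTop (𝓝 (ω x))) :
    Continuous ω :=
  multilinear_pointwise_limit_continuous_general ω F hF hlim
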